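/- Let R be a commutative ring and let f, g ∈ R(S_∞). Assume that for every permutation w ∈ S_∞, the element Σ_{u : u ⋆ w = w} (−1)^{ℓ(u)} f(u) of R is not a zero divisor. If fg = f in R(S_∞), then g = 1̲, the characteristic function of the identity permutation. -/

import Mathlib

/-- The simple transposition `sᵢ = (i, i+1)` acting on the positive integers. -/
def simpleTransposition (i : ℕ+) : Equiv.Perm ℕ+ := Equiv.swap i (i + 1)

/-- The length `ℓ(w)` of a permutation: its number of inversions. -/
noncomputable def permLength (w : Equiv.Perm ℕ+) : ℕ :=
  Set.ncard {p : ℕ+ × ℕ+ | p.1 < p.2 ∧ w p.2 < w p.1}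

/-- One step of Hecke evaluation: multiply by `sᵢ` if this increases the length,
otherwise do nothing. -/
noncomputable def heckeStep (u : Equiv.Perm ℕ+) (i : ℕ+) : Equiv.Perm ℕ+ :=
  if permLength (u * simpleTransposition i) = permLength u + 1 then u * simpleTransposition i
  else u

/-- The Hecke evaluation of a word of positive integers. -/
noncomputable def heckeEval (l : List ℕ+) : Equiv.Perm ℕ+ := l.foldl heckeStep 1

/-- `l` is a reduced word for the permutation `w`. -/
def IsReducedWord (w : Equiv.Perm ℕ+) (l : List ℕ+) : Prop :=
  l.length = permLength w ∧ (l.map simpleTransposition).prod = w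

/-- A permutation lies in `S_∞` iff it fixes all but finitely many points. -/
def FinitelySupported (w : Equiv.Perm ℕ+) : Prop := {i : ℕ+ | w i ≠ i}.Finite

/-- The Demazure product `u ⋆ v`: the Hecke evaluation of the concatenation of a
reduced word for `u` with a reduced word for `v`. -/
noncomputable def demazure (u v : Equiv.Perm ℕ+) : Equiv.Perm ℕ+ :=
  heckeEval (Classical.epsilon (IsReducedWord u) ++ Classical.epsilon (IsReducedWord v))

/-- The group `S_∞` of permutations of the positive integers fixing all but finitely
many points. -/
def SInfty : Subgroup (Equiv.Perm ℕ+) where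
  carrier := {w | FinitelySupported w}
  one_mem' := by simp [FinitelySupported]
  mul_mem' := by
    intro a b ha hb
    refine Set.Finite.subset (Set.Finite.union ha hb) ?_
    intro i hi
    simp only [Set.mem_setOf_eq, Set.mem_union, Equiv.Perm.mul_apply] at hi ⊢
    by_cases h : b i = i
    · rw [h] at hi
      exact Or.inl hi
    · exact Or.inr h
  inv_mem' := by
    intro a ha
    have : {i : ℕ+ | a⁻¹ i ≠ i} = {i : ℕ+ | a i ≠ i} := by
      ext i
      simp only [Set.mem_setOf_eq, ne_eq, Equiv.Perm.inv_eq_iff_eq]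
      exact not_congr eq_comm
    exact Set.Finite.subset ha this.le

/-- The product on `R(S_∞)`:
`(fg)(w) = Σ_{u ⋆ v = w} (−1)^{ℓ(u)+ℓ(v)−ℓ(w)} f(u) g(v)`. -/
noncomputable def heckeMul {R : Type*} [CommRing R] (f g : ↥SInfty → R) : ↥SInfty → R :=
  fun w =>
    ∑ᶠ (p : ↥SInfty × ↥SInfty)
        (_ : demazure (p.1 : Equiv.Perm ℕ+) (p.2 : Equiv.Perm ℕ+) = (w : Equiv.Perm ℕ+)),
      (-1 : R) ^ (permLength (p.1 : Equiv.Perm ℕ+) + permLength (p.2 : Equiv.Perm ℕ+)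
          - permLength (w : Equiv.Perm ℕ+)) * f p.1 * g p.2

open Classical in
/-- The characteristic function `1̲` of the identity permutation. -/
noncomputable def heckeOne {R : Type*} [CommRing R] : ↥SInfty → R := fun w => if w = 1 then 1 else 0

section Aux
open Equiv

local notation "σ" => simpleTransposition
local notation "ℓ" => permLength

/-- The inversion set of a permutation. -/
def invSet (w : Perm ℕ+) : Set (ℕ+ × ℕ+) := {p | p.1 < p.2 ∧ w p.2 < w p.1}

lemma permLength_def (w : Perm ℕ+) : ℓ w = (invSet w).ncard := rfl

lemma self_lt_succ (i : ℕ+) : i < i + 1 := PNat.lt_add_one_iff.mpr le_rfl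

/-- A bound on the support. -/
def BddSupp (w : Perm ℕ+) (n : ℕ+) : Prop := ∀ m, n < m → w m = m

lemma BddSupp.apply_le {w : Perm ℕ+} {n : ℕ+} (h : BddSupp w n) {a : ℕ+} (ha : a ≤ n) :
    w a ≤ n := by
  by_contra hc
  push_neg at hc
  have h2 : w (w a) = w a := h _ hc
  have h3 : w a = a := w.injective h2
  rw [h3] at hc
  exact absurd ha (not_le.mpr hc)

lemma FinitelySupported.exists_bddSupp {w : Perm ℕ+} (hw : FinitelySupported w) :
    ∃ n, BddSupp w n := by
  obtain ⟨n, hn⟩ := hw.bddAbove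
  exact ⟨n, fun m hm => by_contra fun hc => absurd (hn hc) (not_le.mpr hm)⟩

lemma BddSupp.invSet_subset {w : Perm ℕ+} {n : ℕ+} (h : BddSupp w n) :
    invSet w ⊆ Set.Iic n ×ˢ Set.Iic n := by
  rintro ⟨a, b⟩ ⟨hab, hw⟩
  have hb : b ≤ n := by
    by_contra hb
    push_neg at hb
    rw [h b hb] at hw
    have hna : n < w a := lt_trans hb hw
    have : w (w a) = w a := h _ hna
    have : w a = a := w.injective this
    rw [this] at hw
    exact absurd hab (not_lt.mpr (le_of_lt hw))
  exact ⟨le_of_lt (lt_of_lt_of_le hab hb), hb⟩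

lemma FinitelySupported.invSet_finite {w : Perm ℕ+} (hw : FinitelySupported w) :
    (invSet w).Finite := by
  obtain ⟨n, hn⟩ := hw.exists_bddSupp
  exact Set.Finite.subset (Set.Finite.prod (Set.finite_Iic n) (Set.finite_Iic n))
    hn.invSet_subset

lemma sigma_lt_sigma {i a b : ℕ+} (hab : a < b) (hne : ¬(a = i ∧ b = i + 1)) :
    σ i a < σ i b := by
  unfold simpleTransposition
  rcases eq_or_ne a i with rfl | hai
  · -- a = i, then b ≠ i + 1 and b > i, so b > i + 1
    have hb1 : b ≠ a + 1 := fun hb => hne ⟨rfl, hb⟩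
    have hb2 : a + 1 < b := lt_of_le_of_ne (PNat.add_one_le_iff.mpr hab) (Ne.symm hb1)
    rw [Equiv.swap_apply_left, Equiv.swap_apply_of_ne_of_ne (ne_of_gt hab) (ne_of_gt hb2)]
    exact hb2
  rcases eq_or_ne a (i + 1) with rfl | hai1
  · have hb : i + 1 < b := hab
    have hbi : b ≠ i := ne_of_gt (lt_trans (self_lt_succ i) hb)
    rw [Equiv.swap_apply_right, Equiv.swap_apply_of_ne_of_ne hbi (ne_of_gt hb)]
    exact lt_trans (self_lt_succ i) hb
  rcases eq_or_ne b i with rfl | hbi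
  · rw [Equiv.swap_apply_left, Equiv.swap_apply_of_ne_of_ne hai hai1]
    exact lt_trans hab (self_lt_succ b)
  rcases eq_or_ne b (i + 1) with rfl | hbi1
  · rw [Equiv.swap_apply_right, Equiv.swap_apply_of_ne_of_ne hai hai1]
    exact lt_of_le_of_ne (PNat.lt_add_one_iff.mp hab) hai
  · rw [Equiv.swap_apply_of_ne_of_ne hai hai1, Equiv.swap_apply_of_ne_of_ne hbi hbi1]
    exact hab

lemma sigma_pair_of_not_lt {i a b : ℕ+} (hab : a < b) (h : ¬ σ i a < σ i b) :
    a = i ∧ b = i + 1 := by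
  by_contra hc
  exact h (sigma_lt_sigma hab hc)

lemma sigma_sigma (i a : ℕ+) : σ i (σ i a) = a := Equiv.swap_apply_self _ _ _

lemma fs_one : FinitelySupported (1 : Perm ℕ+) := by simp [FinitelySupported]

lemma fs_sigma (i : ℕ+) : FinitelySupported (σ i) := by
  apply Set.Finite.subset ((Set.finite_singleton (i+1)).insert i)
  intro x hx
  simp only [Set.mem_setOf_eq] at hx
  by_contra hmem
  simp only [Set.mem_insert_iff, Set.mem_singleton_iff, not_or] at hmem
  exact hx (Equiv.swap_apply_of_ne_of_ne hmem.1 hmem.2)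

lemma fs_mul {u v : Perm ℕ+} (hu : FinitelySupported u) (hv : FinitelySupported v) :
    FinitelySupported (u * v) := SInfty.mul_mem hu hv

lemma fs_inv {u : Perm ℕ+} (hu : FinitelySupported u) : FinitelySupported u⁻¹ :=
  SInfty.inv_mem hu

end Aux
section Aux2
open Equiv

local notation "σ" => simpleTransposition
local notation "ℓ" => permLength

lemma fs_mul_sigma {w : Perm ℕ+} (hw : FinitelySupported w) (i : ℕ+) :
    FinitelySupported (w * σ i) := fs_mul hw (fs_sigma i)

lemma length_mul_sigma_of_ascent {w : Perm ℕ+} (hw : FinitelySupported w) {i : ℕ+}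
    (h : w i < w (i + 1)) : ℓ (w * σ i) = ℓ w + 1 := by
  set Φ : ℕ+ × ℕ+ → ℕ+ × ℕ+ := fun p => (σ i p.1, σ i p.2) with hΦ
  have hΦinv : Function.Involutive Φ := by
    intro p
    simp [hΦ, sigma_sigma]
  have heq : invSet (w * σ i) = insert (i, i + 1) (Φ '' invSet w) := by
    ext ⟨c, d⟩
    constructor
    · rintro ⟨hcd, hinv⟩
      simp only [Perm.mul_apply] at hinv
      by_cases hp : c = i ∧ d = i + 1
      · exact Set.mem_insert_iff.mpr (Or.inl (Prod.ext hp.1 hp.2))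
      · refine Set.mem_insert_iff.mpr (Or.inr ⟨(σ i c, σ i d), ⟨sigma_lt_sigma hcd hp, hinv⟩, ?_⟩)
        simp [hΦ, sigma_sigma]
    · intro hm
      rcases Set.mem_insert_iff.mp hm with hp | ⟨⟨a, b⟩, ⟨hab, hba⟩, himg⟩
      · rw [hp]
        refine ⟨self_lt_succ i, ?_⟩
        simp only [Perm.mul_apply, simpleTransposition, Equiv.swap_apply_left,
          Equiv.swap_apply_right]
        exact h
      · have h1 : σ i a = c := congrArg Prod.fst himg
        have h2 : σ i b = d := congrArg Prod.snd himg
        rw [← h1, ← h2]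
        have hne : ¬(a = i ∧ b = i + 1) := by
          rintro ⟨rfl, rfl⟩
          exact absurd h (not_lt.mpr (le_of_lt hba))
        refine ⟨sigma_lt_sigma hab hne, ?_⟩
        simp only [Perm.mul_apply, sigma_sigma]
        exact hba
  have hnot : (i, i + 1) ∉ Φ '' invSet w := by
    rintro ⟨⟨a, b⟩, ⟨hab, _⟩, himg⟩
    have h1 : σ i a = i := congrArg Prod.fst himg
    have h2 : σ i b = i + 1 := congrArg Prod.snd himg
    have h1' := congrArg (σ i) h1
    have h2' := congrArg (σ i) h2
    rw [sigma_sigma] at h1' h2'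
    rw [h1', h2'] at hab
    simp only [simpleTransposition, Equiv.swap_apply_left, Equiv.swap_apply_right] at hab
    exact absurd hab (not_lt.mpr (le_of_lt (self_lt_succ i)))
  have hfin := hw.invSet_finite
  rw [permLength_def, permLength_def, heq,
    Set.ncard_insert_of_notMem hnot (hfin.image Φ),
    Set.ncard_image_of_injective _ hΦinv.injective]

lemma length_mul_sigma_of_descent {w : Perm ℕ+} (hw : FinitelySupported w) {i : ℕ+}
    (h : w (i + 1) < w i) : ℓ w = ℓ (w * σ i) + 1 := by
  have h2 : (w * σ i) i < (w * σ i) (i + 1) := by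
    simp only [Perm.mul_apply, simpleTransposition, Equiv.swap_apply_left,
      Equiv.swap_apply_right]
    exact h
  have := length_mul_sigma_of_ascent (fs_mul_sigma hw i) h2
  have hss : w * σ i * σ i = w := by
    rw [mul_assoc]
    simp [simpleTransposition, Equiv.swap_mul_self]
  rw [hss] at this
  exact this

lemma apply_ne_apply_succ (w : Perm ℕ+) (i : ℕ+) : w i ≠ w (i + 1) :=
  fun h => absurd (w.injective h) (ne_of_lt (self_lt_succ i))

lemma ascent_iff {w : Perm ℕ+} (hw : FinitelySupported w) (i : ℕ+) :
    ℓ (w * σ i) = ℓ w + 1 ↔ w i < w (i + 1) := by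
  constructor
  · intro hl
    rcases lt_or_gt_of_ne (apply_ne_apply_succ w i) with h | h
    · exact h
    · have := length_mul_sigma_of_descent hw h
      omega
  · exact length_mul_sigma_of_ascent hw

lemma length_inv (w : Perm ℕ+) : ℓ w⁻¹ = ℓ w := by
  rw [permLength_def, permLength_def]
  have : invSet w⁻¹ = (fun p : ℕ+ × ℕ+ => (w p.2, w p.1)) '' invSet w := by
    ext ⟨c, d⟩
    constructor
    · rintro ⟨hcd, hinv⟩
      exact ⟨(w⁻¹ d, w⁻¹ c), ⟨hinv, by simp [hcd]⟩, by simp⟩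
    · rintro ⟨⟨a, b⟩, ⟨hab, hba⟩, himg⟩
      have h1 : w b = c := congrArg Prod.fst himg
      have h2 : w a = d := congrArg Prod.snd himg
      rw [← h1, ← h2]
      exact ⟨hba, by simp [hab]⟩
  rw [this, Set.ncard_image_of_injOn]
  intro p _ q _ hpq
  have h1 : p.2 = q.2 := w.injective (congrArg Prod.fst hpq)
  have h2 : p.1 = q.1 := w.injective (congrArg Prod.snd hpq)
  exact Prod.ext h2 h1

lemma sigma_inv (i : ℕ+) : (σ i)⁻¹ = σ i := by
  simp [simpleTransposition, Equiv.swap_inv]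

lemma length_sigma_mul_eq (w : Perm ℕ+) (i : ℕ+) : ℓ (σ i * w) = ℓ (w⁻¹ * σ i) := by
  rw [← length_inv (σ i * w), mul_inv_rev, sigma_inv]

lemma lascent_iff {w : Perm ℕ+} (hw : FinitelySupported w) (i : ℕ+) :
    ℓ (σ i * w) = ℓ w + 1 ↔ w⁻¹ i < w⁻¹ (i + 1) := by
  rw [length_sigma_mul_eq, ← length_inv w]
  exact ascent_iff (fs_inv hw) i

end Aux2
section Aux3
open Equiv

local notation "σ" => simpleTransposition
local notation "ℓ" => permLength

lemma strictMono_perm_eq_one {w : Perm ℕ+} (hw : StrictMono (w : ℕ+ → ℕ+)) : w = 1 := by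
  have hinv : StrictMono ⇑(w⁻¹ : Perm ℕ+) := by
    intro a b hab
    rcases lt_trichotomy (w⁻¹ a) (w⁻¹ b) with h | h | h
    · exact h
    · exact absurd (congrArg w h) (by simp [ne_of_lt hab])
    · have := hw h
      simp only [Perm.coe_inv, Equiv.apply_symm_apply] at this
      exact absurd hab (not_lt.mpr (le_of_lt this))
  have h1 : ∀ x, x ≤ w x := fun x => hw.le_apply
  ext x
  have h2 : w x ≤ w⁻¹ (w x) := hinv.le_apply
  rw [Perm.coe_inv, Equiv.symm_apply_apply] at h2
  simpa using le_antisymm h2 (h1 x)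

lemma pnatStrictMono_of_lt_succ {f : ℕ+ → ℕ+} (h : ∀ i, f i < f (i + 1)) : StrictMono f := by
  have key : ∀ k : ℕ, ∀ a : ℕ+, f a < f (a + k.succPNat) := by
    intro k
    induction k with
    | zero =>
      intro a
      have : a + Nat.succPNat 0 = a + 1 := rfl
      rw [this]
      exact h a
    | succ n ih =>
      intro a
      refine lt_trans (ih a) ?_
      have harith : a + Nat.succPNat (n + 1) = (a + n.succPNat) + 1 := by
        apply PNat.coe_injective
        simp [PNat.add_coe, Nat.succPNat_coe]; omega
      rw [harith]
      exact h _
  intro a b hab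
  have hab' : (a : ℕ) < (b : ℕ) := hab
  obtain ⟨k, hk⟩ : ∃ k : ℕ, (b : ℕ) = (a : ℕ) + (k + 1) := ⟨(b : ℕ) - (a : ℕ) - 1, by omega⟩
  have hb : b = a + k.succPNat := by
    apply PNat.coe_injective
    simp [PNat.add_coe, Nat.succPNat_coe, hk]
  rw [hb]
  exact key k a

lemma eq_one_of_length_zero {w : Perm ℕ+} (hw : FinitelySupported w) (h : ℓ w = 0) :
    w = 1 := by
  have hemp : invSet w = ∅ := by
    rw [permLength_def] at h
    exact (Set.ncard_eq_zero hw.invSet_finite).mp h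
  apply strictMono_perm_eq_one
  intro a b hab
  rcases lt_trichotomy (w a) (w b) with h' | h' | h'
  · exact h'
  · exact absurd (w.injective h') (ne_of_lt hab)
  · have hm : (a, b) ∈ invSet w := ⟨hab, h'⟩
    rw [hemp] at hm
    exact hm.elim

lemma exists_descent {w : Perm ℕ+} (hne : w ≠ 1) : ∃ i, w (i + 1) < w i := by
  by_contra hc
  push_neg at hc
  apply hne
  apply strictMono_perm_eq_one
  apply pnatStrictMono_of_lt_succ
  intro i
  exact lt_of_le_of_ne (hc i) (apply_ne_apply_succ w i)

lemma length_one : ℓ (1 : Perm ℕ+) = 0 := by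
  rw [permLength_def]
  convert Set.ncard_empty (ℕ+ × ℕ+)
  ext ⟨a, b⟩
  simp only [invSet, Set.mem_setOf_eq, Perm.one_apply, Set.mem_empty_iff_false, iff_false]
  rintro ⟨h1, h2⟩
  exact absurd h1 (not_lt.mpr (le_of_lt h2))

lemma exists_reduced {w : Perm ℕ+} (hw : FinitelySupported w) :
    ∃ l, IsReducedWord w l := by
  generalize hn : ℓ w = n
  induction n using Nat.strong_induction_on generalizing w with
  | _ n ih =>
    rcases eq_or_ne w 1 with rfl | hne
    · exact ⟨[], by simp [IsReducedWord, length_one]⟩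
    · obtain ⟨i, hi⟩ := exists_descent hne
      have hd := length_mul_sigma_of_descent hw hi
      have hfs' := fs_mul_sigma hw i
      obtain ⟨l, hl1, hl2⟩ := ih (ℓ (w * σ i)) (by omega) hfs' rfl
      refine ⟨l ++ [i], ?_, ?_⟩
      · simp [hl1]; omega
      · simp only [List.map_append, List.prod_append, hl2, List.map_cons, List.map_nil,
          List.prod_cons, List.prod_nil, mul_one]
        rw [mul_assoc]
        simp [simpleTransposition, Equiv.swap_mul_self]

end Aux3
section Aux4
open Equiv

local notation "σ" => simpleTransposition
local notation "ℓ" => permLength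

lemma heckeStep_cases (x : Perm ℕ+) (i : ℕ+) :
    heckeStep x i = x ∨ ℓ (heckeStep x i) = ℓ x + 1 := by
  unfold heckeStep
  split_ifs with h
  · exact Or.inr h
  · exact Or.inl rfl

lemma fs_heckeStep {x : Perm ℕ+} (hx : FinitelySupported x) (i : ℕ+) :
    FinitelySupported (heckeStep x i) := by
  unfold heckeStep
  split_ifs
  · exact fs_mul_sigma hx i
  · exact hx

lemma le_length_heckeStep (x : Perm ℕ+) (i : ℕ+) : ℓ x ≤ ℓ (heckeStep x i) := by
  rcases heckeStep_cases x i with h | h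
  · rw [h]
  · omega

lemma fs_foldl {l : List ℕ+} {x : Perm ℕ+} (hx : FinitelySupported x) :
    FinitelySupported (List.foldl heckeStep x l) := by
  induction l generalizing x with
  | nil => exact hx
  | cons i l ih => exact ih (fs_heckeStep hx i)

lemma le_length_foldl (l : List ℕ+) (x : Perm ℕ+) :
    ℓ x ≤ ℓ (List.foldl heckeStep x l) := by
  induction l generalizing x with
  | nil => exact le_refl _
  | cons i l ih => exact le_trans (le_length_heckeStep x i) (ih (heckeStep x i))

lemma foldl_eq_of_length_eq {l : List ℕ+} {x : Perm ℕ+}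
    (h : ℓ (List.foldl heckeStep x l) = ℓ x) : List.foldl heckeStep x l = x := by
  induction l generalizing x with
  | nil => rfl
  | cons i l ih =>
    simp only [List.foldl_cons] at h ⊢
    rcases heckeStep_cases x i with hc | hc
    · rw [hc] at h ⊢
      exact ih h
    · have h1 := le_length_foldl l (heckeStep x i)
      omega

lemma mul_sigma_sigma (x : Perm ℕ+) (i : ℕ+) : x * σ i * σ i = x := by
  rw [mul_assoc]
  simp [simpleTransposition, Equiv.swap_mul_self]

lemma bddSupp_heckeStep_rev {x : Perm ℕ+} (hx : FinitelySupported x) {i n : ℕ+}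
    (h : BddSupp (heckeStep x i) n) : BddSupp x n := by
  unfold heckeStep at h
  split_ifs at h with hc
  · -- h : BddSupp (x * σ i) n, hc : ascent
    have hasc : x i < x (i + 1) := (ascent_iff hx i).mp hc
    set z := x * σ i with hz
    have hzi : z i = x (i + 1) := by
      simp [hz, Perm.mul_apply, simpleTransposition, Equiv.swap_apply_left]
    have hzi1 : z (i + 1) = x i := by
      simp [hz, Perm.mul_apply, simpleTransposition, Equiv.swap_apply_right]
    have hdesc : z (i + 1) < z i := by rw [hzi, hzi1]; exact hasc
    have hin : i + 1 ≤ n := by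
      by_contra hcon
      push_neg at hcon
      have hni : n ≤ i := PNat.lt_add_one_iff.mp hcon
      have hz1 : z (i + 1) = i + 1 := h _ (lt_of_le_of_lt hni (self_lt_succ i))
      rcases eq_or_lt_of_le hni with rfl | hlt
      · have : z n ≤ n := h.apply_le (le_refl n)
        rw [hz1] at hdesc
        exact absurd (lt_of_le_of_lt this (self_lt_succ n)) (not_lt.mpr (le_of_lt hdesc))
      · have hz2 : z i = i := h _ hlt
        rw [hz1, hz2] at hdesc
        exact absurd hdesc (not_lt.mpr (le_of_lt (self_lt_succ i)))
    intro m hm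
    have hmi : m ≠ i := ne_of_gt (lt_of_le_of_lt (le_of_lt (self_lt_succ i)) (lt_of_le_of_lt hin hm))
    have hmi1 : m ≠ i + 1 := ne_of_gt (lt_of_le_of_lt hin hm)
    have hx' : x = z * σ i := (mul_sigma_sigma x i).symm ▸ rfl
    calc x m = z (σ i m) := by rw [hx']; rfl
    _ = z m := by
        have hsm : σ i m = m := Equiv.swap_apply_of_ne_of_ne hmi hmi1
        rw [hsm]
    _ = m := h m hm
  · exact h

lemma bddSupp_foldl_rev {l : List ℕ+} {x : Perm ℕ+} (hx : FinitelySupported x) {n : ℕ+}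
    (h : BddSupp (List.foldl heckeStep x l) n) : BddSupp x n := by
  induction l generalizing x with
  | nil => exact h
  | cons i l ih => exact bddSupp_heckeStep_rev hx (ih (fs_heckeStep hx i) h)

lemma length_sigma (i : ℕ+) : ℓ (σ i) = 1 := by
  rw [permLength_def]
  have : invSet (σ i) = {(i, i + 1)} := by
    ext ⟨a, b⟩
    constructor
    · rintro ⟨hab, hba⟩
      have := sigma_pair_of_not_lt hab (not_lt.mpr (le_of_lt hba))
      exact Set.mem_singleton_iff.mpr (Prod.ext this.1 this.2)
    · rintro h
      rw [Set.mem_singleton_iff] at h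
      rw [h]
      refine ⟨self_lt_succ i, ?_⟩
      simp [simpleTransposition, Equiv.swap_apply_left, Equiv.swap_apply_right, self_lt_succ i]
  rw [this, Set.ncard_singleton]

lemma heckeStep_one (i : ℕ+) : heckeStep 1 i = σ i := by
  unfold heckeStep
  rw [one_mul, length_one, length_sigma]
  simp

lemma heckeEval_nil : heckeEval [] = 1 := rfl

lemma heckeEval_append_singleton (l : List ℕ+) (i : ℕ+) :
    heckeEval (l ++ [i]) = heckeStep (heckeEval l) i := by
  simp [heckeEval, List.foldl_append]

lemma fs_heckeEval (l : List ℕ+) : FinitelySupported (heckeEval l) := fs_foldl fs_one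

lemma fs_prod_sigma (l : List ℕ+) : FinitelySupported ((l.map σ).prod) := by
  induction l using List.reverseRecOn with
  | nil => exact fs_one
  | append_singleton l i ih =>
    simp only [List.map_append, List.prod_append, List.map_cons, List.map_nil,
      List.prod_cons, List.prod_nil, mul_one]
    exact fs_mul_sigma ih i

lemma length_mul_sigma_cases {w : Perm ℕ+} (hw : FinitelySupported w) (i : ℕ+) :
    ℓ (w * σ i) = ℓ w + 1 ∨ ℓ w = ℓ (w * σ i) + 1 := by
  rcases lt_or_gt_of_ne (apply_ne_apply_succ w i) with h | h
  · exact Or.inl (length_mul_sigma_of_ascent hw h)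
  · exact Or.inr (length_mul_sigma_of_descent hw h)

lemma length_prod_le (l : List ℕ+) : ℓ ((l.map σ).prod) ≤ l.length := by
  induction l using List.reverseRecOn with
  | nil => simp [length_one]
  | append_singleton l i ih =>
    simp only [List.map_append, List.prod_append, List.map_cons, List.map_nil,
      List.prod_cons, List.prod_nil, mul_one, List.length_append, List.length_cons,
      List.length_nil]
    rcases length_mul_sigma_cases (fs_prod_sigma l) i with h | h <;> omega

lemma heckeEval_of_reduced {l : List ℕ+} {w : Perm ℕ+} (h : IsReducedWord w l) :
    heckeEval l = w := by
  induction l using List.reverseRecOn generalizing w with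
  | nil =>
    obtain ⟨h1, h2⟩ := h
    simp only [List.map_nil, List.prod_nil] at h2
    rw [heckeEval_nil, h2]
  | append_singleton l i ih =>
    obtain ⟨h1, h2⟩ := h
    simp only [List.map_append, List.prod_append, List.map_cons, List.map_nil,
      List.prod_cons, List.prod_nil, mul_one] at h2
    simp only [List.length_append, List.length_cons, List.length_nil] at h1
    have hle : ℓ ((l.map σ).prod) ≤ l.length := length_prod_le l
    rw [← h2] at h1
    rcases length_mul_sigma_cases (fs_prod_sigma l) i with hc | hc
    · -- ascent
      have hlx : ℓ ((l.map σ).prod) = l.length := by omega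
      have hred : IsReducedWord ((l.map σ).prod) l := ⟨hlx.symm, rfl⟩
      rw [heckeEval_append_singleton, ih hred]
      unfold heckeStep
      rw [if_pos hc, h2]
    · -- descent: contradiction
      omega

end Aux4
section Aux5
open Equiv

local notation "σ" => simpleTransposition
local notation "ℓ" => permLength

/-- Left Hecke step. -/
noncomputable def leftStep (i : ℕ+) (x : Perm ℕ+) : Perm ℕ+ :=
  if ℓ (σ i * x) = ℓ x + 1 then σ i * x else x

lemma length_sigma_mul_cases {x : Perm ℕ+} (hx : FinitelySupported x) (i : ℕ+) :
    ℓ (σ i * x) = ℓ x + 1 ∨ ℓ x = ℓ (σ i * x) + 1 := by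
  have h1 : ℓ (σ i * x) = ℓ (x⁻¹ * σ i) := length_sigma_mul_eq x i
  have h2 : ℓ x⁻¹ = ℓ x := length_inv x
  rcases length_mul_sigma_cases (fs_inv hx) i with h | h
  · left; omega
  · right; omega

lemma fs_sigma_mul {x : Perm ℕ+} (hx : FinitelySupported x) (i : ℕ+) :
    FinitelySupported (σ i * x) := fs_mul (fs_sigma i) hx

lemma braid_eq {x : Perm ℕ+} (hx : FinitelySupported x) {i j : ℕ+}
    (hA : ℓ (σ i * x) = ℓ x + 1) (hB : ℓ (x * σ j) = ℓ x + 1)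
    (hC : ℓ (σ i * x * σ j) = ℓ x) : σ i * x = x * σ j := by
  have hfsy : FinitelySupported (x * σ j) := fs_mul_sigma hx j
  have hcond : ¬ ((x * σ j)⁻¹ i < (x * σ j)⁻¹ (i + 1)) := by
    intro hlt
    have := (lascent_iff hfsy i).mpr hlt
    rw [← mul_assoc] at this
    omega
  have hab : x⁻¹ i < x⁻¹ (i + 1) := (lascent_iff hx i).mp hA
  have hy1 : (x * σ j)⁻¹ i = σ j (x⁻¹ i) := by
    rw [mul_inv_rev, sigma_inv]
    rfl
  have hy2 : (x * σ j)⁻¹ (i + 1) = σ j (x⁻¹ (i + 1)) := by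
    rw [mul_inv_rev, sigma_inv]
    rfl
  rw [hy1, hy2] at hcond
  obtain ⟨ha, hb⟩ := sigma_pair_of_not_lt hab hcond
  have hxj : x j = i := by
    rw [← ha, Perm.coe_inv, Equiv.apply_symm_apply]
  have hxj1 : x (j + 1) = i + 1 := by
    rw [← hb, Perm.coe_inv, Equiv.apply_symm_apply]
  ext t
  simp only [Perm.mul_apply]
  rcases eq_or_ne t j with rfl | htj
  · have h1 : σ t t = t + 1 := Equiv.swap_apply_left t (t + 1)
    rw [h1, hxj1, hxj]
    exact (Equiv.swap_apply_left i (i + 1)).symm ▸ rfl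
  rcases eq_or_ne t (j + 1) with rfl | htj1
  · have h1 : σ j (j + 1) = j := Equiv.swap_apply_right j (j + 1)
    rw [h1, hxj, hxj1]
    exact Equiv.swap_apply_right i (i + 1)
  · have h1 : σ j t = t := Equiv.swap_apply_of_ne_of_ne htj htj1
    rw [h1]
    have h2 : x t ≠ i := by
      intro hc
      exact htj (by rw [← ha, ← hc, Perm.coe_inv, Equiv.symm_apply_apply])
    have h3 : x t ≠ i + 1 := by
      intro hc
      exact htj1 (by rw [← hb, ← hc, Perm.coe_inv, Equiv.symm_apply_apply])
    exact Equiv.swap_apply_of_ne_of_ne h2 h3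

lemma step_comm {x : Perm ℕ+} (hx : FinitelySupported x) (i j : ℕ+) :
    heckeStep (leftStep i x) j = leftStep i (heckeStep x j) := by
  unfold heckeStep leftStep
  by_cases hB : ℓ (x * σ j) = ℓ x + 1
  · by_cases hA : ℓ (σ i * x) = ℓ x + 1
    · rw [if_pos hA, if_pos hB]
      by_cases hC : ℓ (σ i * x * σ j) = ℓ x + 2
      · have c1 : ℓ (σ i * x * σ j) = ℓ (σ i * x) + 1 := by omega
        have c2 : ℓ (σ i * (x * σ j)) = ℓ (x * σ j) + 1 := by rw [← mul_assoc]; omega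
        rw [if_pos c1, if_pos c2, mul_assoc]
      · have hC' : ℓ (σ i * x * σ j) = ℓ x := by
          rcases length_mul_sigma_cases (fs_sigma_mul hx i) j with h | h
          · omega
          · rcases length_sigma_mul_cases (fs_mul_sigma hx j) i with h' | h'
            · rw [← mul_assoc] at h'; omega
            · rw [← mul_assoc] at h'; omega
        have c1 : ¬ ℓ (σ i * x * σ j) = ℓ (σ i * x) + 1 := by omega
        have c2 : ¬ ℓ (σ i * (x * σ j)) = ℓ (x * σ j) + 1 := by rw [← mul_assoc]; omega
        rw [if_neg c1, if_neg c2]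
        exact braid_eq hx hA hB hC'
    · rw [if_neg hA, if_pos hB]
      have hA' : ℓ x = ℓ (σ i * x) + 1 := by
        rcases length_sigma_mul_cases hx i with h | h
        · omega
        · omega
      have hC' : ℓ (σ i * x * σ j) = ℓ x := by
        rcases length_mul_sigma_cases (fs_sigma_mul hx i) j with h | h
        · rcases length_sigma_mul_cases (fs_mul_sigma hx j) i with h' | h'
          · rw [← mul_assoc] at h'; omega
          · rw [← mul_assoc] at h'; omega
        · rcases length_sigma_mul_cases (fs_mul_sigma hx j) i with h' | h'
          · rw [← mul_assoc] at h'; omega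
          · rw [← mul_assoc] at h'; omega
      have c2 : ¬ ℓ (σ i * (x * σ j)) = ℓ (x * σ j) + 1 := by rw [← mul_assoc]; omega
      rw [if_neg c2]
  · by_cases hA : ℓ (σ i * x) = ℓ x + 1
    · rw [if_pos hA, if_neg hB]
      have hB' : ℓ x = ℓ (x * σ j) + 1 := by
        rcases length_mul_sigma_cases hx j with h | h
        · omega
        · omega
      have hC' : ℓ (σ i * x * σ j) = ℓ x := by
        rcases length_mul_sigma_cases (fs_sigma_mul hx i) j with h | h
        · rcases length_sigma_mul_cases (fs_mul_sigma hx j) i with h' | h'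
          · rw [← mul_assoc] at h'; omega
          · rw [← mul_assoc] at h'; omega
        · rcases length_sigma_mul_cases (fs_mul_sigma hx j) i with h' | h'
          · rw [← mul_assoc] at h'; omega
          · rw [← mul_assoc] at h'; omega
      have c1 : ¬ ℓ (σ i * x * σ j) = ℓ (σ i * x) + 1 := by omega
      rw [if_neg c1, if_pos hA]
    · rw [if_neg hA, if_neg hB, if_neg hA]

lemma leftStep_foldl {x : Perm ℕ+} (hx : FinitelySupported x) (i : ℕ+) (l : List ℕ+) :
    List.foldl heckeStep (leftStep i x) l = leftStep i (List.foldl heckeStep x l) := by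
  induction l generalizing x with
  | nil => rfl
  | cons j l ih =>
    simp only [List.foldl_cons]
    rw [step_comm hx i j, ih (fs_heckeStep hx j)]

lemma leftStep_one (i : ℕ+) : leftStep i 1 = σ i := by
  unfold leftStep
  rw [mul_one, length_one, length_sigma]
  simp

lemma heckeEval_cons (i : ℕ+) (l : List ℕ+) :
    heckeEval (i :: l) = leftStep i (heckeEval l) := by
  show List.foldl heckeStep (heckeStep 1 i) l = _
  rw [heckeStep_one, ← leftStep_one i, leftStep_foldl fs_one]
  rfl

lemma heckeStep_inv (x : Perm ℕ+) (i : ℕ+) : heckeStep x⁻¹ i = (leftStep i x)⁻¹ := by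
  unfold heckeStep leftStep
  have hcond : ℓ (x⁻¹ * σ i) = ℓ x⁻¹ + 1 ↔ ℓ (σ i * x) = ℓ x + 1 := by
    rw [length_sigma_mul_eq, length_inv x]
  by_cases hc : ℓ (σ i * x) = ℓ x + 1
  · rw [if_pos (hcond.mpr hc), if_pos hc, mul_inv_rev, sigma_inv]
  · rw [if_neg (fun hh => hc (hcond.mp hh)), if_neg hc]

lemma heckeEval_reverse (l : List ℕ+) : heckeEval l.reverse = (heckeEval l)⁻¹ := by
  induction l with
  | nil => simp [heckeEval_nil]
  | cons i m ih =>
    rw [List.reverse_cons, heckeEval_append_singleton, ih, heckeEval_cons,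
      heckeStep_inv]

lemma heckeEval_append (l1 l2 : List ℕ+) :
    heckeEval (l1 ++ l2) = List.foldl heckeStep (heckeEval l1) l2 := by
  simp [heckeEval, List.foldl_append]

end Aux5
section Aux6
open Equiv

local notation "σ" => simpleTransposition
local notation "ℓ" => permLength

lemma reducedWord_spec {u : Perm ℕ+} (hu : FinitelySupported u) :
    IsReducedWord u (Classical.epsilon (IsReducedWord u)) :=
  Classical.epsilon_spec (exists_reduced hu)

lemma demazure_eq_foldl {u : Perm ℕ+} (v : Perm ℕ+) (hu : FinitelySupported u) :
    demazure u v = List.foldl heckeStep u (Classical.epsilon (IsReducedWord v)) := by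
  unfold demazure
  rw [heckeEval_append, heckeEval_of_reduced (reducedWord_spec hu)]

lemma demazure_one_right {u : Perm ℕ+} (hu : FinitelySupported u) : demazure u 1 = u := by
  have hspec := reducedWord_spec fs_one
  have hlen : (Classical.epsilon (IsReducedWord (1 : Perm ℕ+))).length = 0 := by
    rw [hspec.1, length_one]
  rw [demazure_eq_foldl 1 hu, List.length_eq_zero_iff.mp hlen]
  rfl

lemma fs_demazure {u v : Perm ℕ+} (hu : FinitelySupported u) :
    FinitelySupported (demazure u v) := by
  rw [demazure_eq_foldl v hu]
  exact fs_foldl hu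

lemma length_le_demazure_left {u v : Perm ℕ+} (hu : FinitelySupported u) :
    ℓ u ≤ ℓ (demazure u v) := by
  rw [demazure_eq_foldl v hu]
  exact le_length_foldl _ u

lemma bddSupp_demazure_left {u v : Perm ℕ+} (hu : FinitelySupported u) {n : ℕ+}
    (h : BddSupp (demazure u v) n) : BddSupp u n := by
  rw [demazure_eq_foldl v hu] at h
  exact bddSupp_foldl_rev hu h

lemma demazure_inv_eq {u v : Perm ℕ+} (hu : FinitelySupported u) (hv : FinitelySupported v) :
    (demazure u v)⁻¹ =
      List.foldl heckeStep v⁻¹ (Classical.epsilon (IsReducedWord u)).reverse := by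
  unfold demazure
  rw [← heckeEval_reverse, List.reverse_append, heckeEval_append, heckeEval_reverse,
    heckeEval_of_reduced (reducedWord_spec hv)]

lemma length_le_demazure_right {u v : Perm ℕ+} (hu : FinitelySupported u)
    (hv : FinitelySupported v) : ℓ v ≤ ℓ (demazure u v) := by
  have h1 := le_length_foldl (Classical.epsilon (IsReducedWord u)).reverse v⁻¹
  rw [← demazure_inv_eq hu hv] at h1
  rw [← length_inv v, ← length_inv (demazure u v)]
  exact h1

lemma demazure_eq_right {u v : Perm ℕ+} (hu : FinitelySupported u)
    (hv : FinitelySupported v) (h : ℓ (demazure u v) = ℓ v) : demazure u v = v := by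
  have h1 : ℓ (List.foldl heckeStep v⁻¹ (Classical.epsilon (IsReducedWord u)).reverse)
      = ℓ v⁻¹ := by
    rw [← demazure_inv_eq hu hv, length_inv, length_inv, h]
  have h2 := foldl_eq_of_length_eq h1
  rw [← demazure_inv_eq hu hv] at h2
  exact inv_injective h2

lemma bddSupp_inv {x : Perm ℕ+} {n : ℕ+} (h : BddSupp x n) : BddSupp x⁻¹ n := by
  intro m hm
  have := h m hm
  rw [← this, Perm.coe_inv, Equiv.symm_apply_apply, this]

lemma bddSupp_demazure_right {u v : Perm ℕ+} (hu : FinitelySupported u)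
    (hv : FinitelySupported v) {n : ℕ+} (h : BddSupp (demazure u v) n) : BddSupp v n := by
  have h1 : BddSupp (demazure u v)⁻¹ n := bddSupp_inv h
  rw [demazure_inv_eq hu hv] at h1
  have h2 := bddSupp_foldl_rev (fs_inv hv) h1
  have := bddSupp_inv h2
  rwa [inv_inv] at this

lemma finite_bddSupp (n : ℕ+) : {x : Perm ℕ+ | BddSupp x n}.Finite := by
  rw [← Set.finite_coe_iff]
  have hfin : Finite ↥(Set.Iic n) := (Set.finite_Iic n).to_subtype
  refine Finite.of_injective
    (fun x : ↥{x : Perm ℕ+ | BddSupp x n} =>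
      (fun a : ↥(Set.Iic n) => (⟨x.1 a.1, x.2.apply_le a.2⟩ : ↥(Set.Iic n)))) ?_
  intro x y hxy
  apply Subtype.ext
  apply Equiv.ext
  intro m
  by_cases hm : m ≤ n
  · have := congrFun hxy ⟨m, hm⟩
    exact congrArg Subtype.val this
  · push_neg at hm
    rw [x.2 m hm, y.2 m hm]

lemma mem_SInfty_iff {x : Perm ℕ+} : x ∈ SInfty ↔ FinitelySupported x := Iff.rfl

end Aux6
section Main
open Equiv Classical

local notation "σ" => simpleTransposition
local notation "ℓ" => permLength

/-- If `Σ_{u ⋆ w = w} (−1)^{ℓ(u)} f(u)` is a non-zero-divisor for every `w`, and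
`fg = f` in `R(S_∞)`, then `g` is the characteristic function of the identity. -/
theorem heckeMul_right_cancel (R : Type*) [CommRing R] (f g : ↥SInfty → R)
    (hf : ∀ w : ↥SInfty,
      (∑ᶠ (u : ↥SInfty) (_ : demazure (u : Equiv.Perm ℕ+) (w : Equiv.Perm ℕ+)
            = (w : Equiv.Perm ℕ+)),
        (-1 : R) ^ permLength (u : Equiv.Perm ℕ+) * f u) ∈ nonZeroDivisors R)
    (h : heckeMul f g = f) :
    g = heckeOne := by
  have hfs : ∀ x : ↥SInfty, FinitelySupported (x : Perm ℕ+) := fun x => x.2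
  have hcoe1 : ((1 : ↥SInfty) : Perm ℕ+) = 1 := rfl
  have key : ∀ n : ℕ, ∀ w : ↥SInfty, ℓ (w : Perm ℕ+) = n → g w = heckeOne w := by
    intro n
    induction n using Nat.strong_induction_on with
    | _ n ih =>
    intro w hw
    obtain ⟨nb, hnb⟩ := (hfs w).exists_bddSupp
    set D : Set (↥SInfty × ↥SInfty) :=
      {p | demazure (p.1 : Perm ℕ+) (p.2 : Perm ℕ+) = (w : Perm ℕ+)} with hDdef
    set U : Set ↥SInfty :=
      {u | demazure (u : Perm ℕ+) (w : Perm ℕ+) = (w : Perm ℕ+)} with hUdef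
    have hBfin : {x : ↥SInfty | BddSupp (x : Perm ℕ+) nb}.Finite :=
      Set.Finite.preimage (Set.injOn_of_injective Subtype.val_injective)
        (finite_bddSupp nb)
    have hDfin : D.Finite := by
      refine Set.Finite.subset (hBfin.prod hBfin) ?_
      rintro ⟨u, v⟩ hp
      have hp' : demazure (u : Perm ℕ+) (v : Perm ℕ+) = (w : Perm ℕ+) := hp
      have hB : BddSupp (demazure (u : Perm ℕ+) (v : Perm ℕ+)) nb := by
        rw [hp']; exact hnb
      exact ⟨bddSupp_demazure_left (hfs u) hB,
        bddSupp_demazure_right (hfs u) (hfs v) hB⟩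
    have hUfin : U.Finite := by
      refine Set.Finite.subset hBfin ?_
      intro u hu
      have hu' : demazure (u : Perm ℕ+) (w : Perm ℕ+) = (w : Perm ℕ+) := hu
      have hB : BddSupp (demazure (u : Perm ℕ+) (w : Perm ℕ+)) nb := by
        rw [hu']; exact hnb
      exact bddSupp_demazure_left (hfs u) hB
    have hmw : heckeMul f g w = ∑ᶠ (p : ↥SInfty × ↥SInfty) (_ : p ∈ D),
        ((-1 : R) ^ (ℓ (p.1 : Perm ℕ+) + ℓ (p.2 : Perm ℕ+) - ℓ (w : Perm ℕ+))
          * f p.1 * g p.2) := rfl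
    have hfw : (∑ᶠ (u : ↥SInfty) (_ : u ∈ U), (-1 : R) ^ ℓ (u : Perm ℕ+) * f u)
        ∈ nonZeroDivisors R := hf w
    rw [finsum_mem_eq_finite_toFinset_sum _ hUfin] at hfw
    set S : R := ∑ u ∈ hUfin.toFinset, (-1 : R) ^ ℓ (u : Perm ℕ+) * f u with hSdef
    have heqn : ∑ p ∈ hDfin.toFinset,
        ((-1 : R) ^ (ℓ (p.1 : Perm ℕ+) + ℓ (p.2 : Perm ℕ+) - ℓ (w : Perm ℕ+))
          * f p.1 * g p.2) = f w := by
      rw [← finsum_mem_eq_finite_toFinset_sum _ hDfin, ← hmw, h]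
    by_cases hw1 : w = 1
    · -- base case
      subst hw1
      have hD1 : D = {((1 : ↥SInfty), (1 : ↥SInfty))} := by
        ext ⟨u, v⟩
        simp only [hDdef, Set.mem_setOf_eq, Set.mem_singleton_iff, Prod.mk.injEq]
        constructor
        · intro hp
          rw [hcoe1] at hp
          have hv0 : ℓ (v : Perm ℕ+) = 0 := by
            have h1 := length_le_demazure_right (hfs u) (hfs v)
            rw [hp, length_one] at h1
            omega
          have hu0 : ℓ (u : Perm ℕ+) = 0 := by
            have h1 := length_le_demazure_left (v := (v : Perm ℕ+)) (hfs u)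
            rw [hp, length_one] at h1
            omega
          exact ⟨Subtype.ext (eq_one_of_length_zero (hfs u) hu0),
            Subtype.ext (eq_one_of_length_zero (hfs v) hv0)⟩
        · rintro ⟨rfl, rfl⟩
          rw [hcoe1]
          exact demazure_one_right fs_one
      have hU1 : U = {(1 : ↥SInfty)} := by
        ext u
        simp only [hUdef, Set.mem_setOf_eq, Set.mem_singleton_iff]
        constructor
        · intro hu
          rw [hcoe1, demazure_one_right (hfs u)] at hu
          exact Subtype.ext hu
        · rintro rfl
          rw [hcoe1]
          exact demazure_one_right fs_one
      have heq2 : f 1 * g 1 = f 1 := by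
        have h1 := heqn
        rw [← finsum_mem_eq_finite_toFinset_sum _ hDfin, hD1, finsum_mem_singleton] at h1
        simp only [hcoe1, length_one, Nat.add_sub_cancel, pow_zero, one_mul] at h1
        exact h1
      have hfw1 : f 1 ∈ nonZeroDivisors R := by
        have h1 : S = f 1 := by
          rw [hSdef, ← finsum_mem_eq_finite_toFinset_sum _ hUfin, hU1,
            finsum_mem_singleton, hcoe1, length_one, pow_zero, one_mul]
        rw [← h1]
        exact hfw
      have hzero : (g 1 - 1) * f 1 = 0 := by
        have : g 1 * f 1 = f 1 := by rw [mul_comm]; exact heq2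
        rw [sub_mul, one_mul, this, sub_self]
      have := mem_nonZeroDivisors_iff_right.mp hfw1 _ hzero
      have hg1 : g 1 = 1 := by
        have := sub_eq_zero.mp this
        simpa using this
      rw [hg1]
      simp [heckeOne]
    · -- inductive case
      have hn0 : n ≠ 0 := by
        intro hc
        apply hw1
        apply Subtype.ext
        rw [hcoe1]
        exact eq_one_of_length_zero (hfs w) (by rw [hw, hc])
      have hg1 : g 1 = 1 := by
        have := ih 0 (Nat.pos_of_ne_zero hn0) 1 (by rw [hcoe1, length_one])
        rw [this]
        simp [heckeOne]
      -- split the sum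
      classical
      set T := hDfin.toFinset with hTdef
      set F : ↥SInfty × ↥SInfty → R := fun p =>
        ((-1 : R) ^ (ℓ (p.1 : Perm ℕ+) + ℓ (p.2 : Perm ℕ+) - ℓ (w : Perm ℕ+))
          * f p.1 * g p.2) with hFdef
      have hsplit : ∑ p ∈ T.filter (fun p => p.2 = w), F p
          + ∑ p ∈ T.filter (fun p => ¬ p.2 = w), F p = ∑ p ∈ T, F p :=
        Finset.sum_filter_add_sum_filter_not T _ F
      -- first sum
      have hfirst : ∑ p ∈ T.filter (fun p => p.2 = w), F p = S * g w := by
        have himg : T.filter (fun p => p.2 = w)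
            = hUfin.toFinset.image (fun u => (u, w)) := by
          ext p
          simp only [Finset.mem_filter, Finset.mem_image, Set.Finite.mem_toFinset, hTdef]
          constructor
          · rintro ⟨hpT, hp2⟩
            refine ⟨p.1, ?_, ?_⟩
            · have : demazure (p.1 : Perm ℕ+) (p.2 : Perm ℕ+) = (w : Perm ℕ+) := hpT
              rw [hp2] at this
              exact this
            · exact Prod.ext rfl hp2.symm
          · rintro ⟨u, hu, rfl⟩
            exact ⟨hu, rfl⟩
        rw [himg, Finset.sum_image (by intro x _ y _ hxy; exact (Prod.ext_iff.mp hxy).1)]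
        have : ∀ u ∈ hUfin.toFinset, F (u, w)
            = ((-1 : R) ^ ℓ (u : Perm ℕ+) * f u) * g w := by
          intro u _
          simp only [hFdef, Nat.add_sub_cancel]
        rw [Finset.sum_congr rfl this, ← Finset.sum_mul]
      -- second sum
      have hsecond : ∑ p ∈ T.filter (fun p => ¬ p.2 = w), F p = f w := by
        have hmem : ((w, (1 : ↥SInfty)) : ↥SInfty × ↥SInfty)
            ∈ T.filter (fun p => ¬ p.2 = w) := by
          simp only [Finset.mem_filter, Set.Finite.mem_toFinset, hTdef]
          constructor
          · show demazure (w : Perm ℕ+) ((1 : ↥SInfty) : Perm ℕ+) = (w : Perm ℕ+)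
            rw [hcoe1]
            exact demazure_one_right (hfs w)
          · exact fun hc => hw1 hc.symm
        rw [Finset.sum_eq_single_of_mem _ hmem]
        · simp only [hFdef, hcoe1, length_one, Nat.add_zero, Nat.sub_self, pow_zero,
            one_mul, hg1, mul_one]
        · rintro b hb hbne
          simp only [Finset.mem_filter, Set.Finite.mem_toFinset, hTdef] at hb
          obtain ⟨hbD, hb2⟩ := hb
          have hbD' : demazure (b.1 : Perm ℕ+) (b.2 : Perm ℕ+) = (w : Perm ℕ+) := hbD
          by_cases hb21 : b.2 = (1 : ↥SInfty)
          · exfalso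
            apply hbne
            have : (b.1 : Perm ℕ+) = (w : Perm ℕ+) := by
              rw [hb21, hcoe1] at hbD'
              rw [← demazure_one_right (hfs b.1), hbD']
            exact Prod.ext (Subtype.ext this) hb21
          · have hlt : ℓ (b.2 : Perm ℕ+) < n := by
              have hle := length_le_demazure_right (hfs b.1) (hfs b.2)
              rw [hbD', hw] at hle
              rcases lt_or_eq_of_le hle with hlt | heq
              · exact hlt
              · exfalso
                apply hb2
                have := demazure_eq_right (hfs b.1) (hfs b.2)
                  (by rw [hbD', hw, heq])
                rw [hbD'] at this
                exact Subtype.ext this.symm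
            have hgb : g b.2 = 0 := by
              rw [ih _ hlt b.2 rfl]
              simp [heckeOne, hb21]
            simp only [hFdef, hgb, mul_zero]
      rw [hfirst, hsecond] at hsplit
      have hSg : S * g w = 0 := by
        have h2 : S * g w + f w = 0 + f w := by
          rw [zero_add]
          exact hsplit.trans heqn
        exact add_right_cancel h2
      have hgw : g w = 0 := by
        have := mem_nonZeroDivisors_iff_right.mp hfw _ (by rw [mul_comm]; exact hSg)
        exact this
      rw [hgw]
      simp [heckeOne, hw1]
  funext w
  exact key (ℓ (w : Perm ℕ+)) w rfl

end Main
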